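/- arXiv:1009.1193 — 3 statements merged into one kernel-verified Lean document; each statement's English description precedes it below -/
import Mathlib

section
/- Let Y be a real Gaussian random variable with mean μ and variance σ² > 0, and for d > 0 define X_d = ⌊Y/d⌋ mod 2 ∈ {0,1}. Then as d → 0⁺, P(X_d = 0) → 1/2; i.e., the distribution of X_d converges to the Bernoulli(1/2) distribution. -/
/-!
If `f` is the density of the law of `Y` and `d ≠ 0`, translating by `d` swaps the even and the odd
cells of the scale-`d` grid, so `P(X_d = 1) = ∫_{even cells} f(d + x) dx` and hence
`|2 P(X_d = 0) - 1| ≤ ∫ |f(d + x) - f(x)| dx`. The right-hand side tends to `0` with `d` because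
translation acts continuously on `L¹`.
-/

open Filter Topology MeasureTheory ProbabilityTheory NNReal

section Translation

variable {G E : Type*} [AddGroup G] [TopologicalSpace G] [IsTopologicalAddGroup G]
  [MeasurableSpace G] [BorelSpace G] [NormedAddCommGroup E]
  {μ : Measure G} [μ.IsAddLeftInvariant] [IsLocallyFiniteMeasure μ] [μ.InnerRegularCompactLTTop]

theorem MeasureTheory.Integrable.tendsto_integral_norm_comp_add_left_sub {f : G → E}
    (hf : Integrable f μ) :
    Tendsto (fun d => ∫ x, ‖f (d + x) - f x‖ ∂μ) (𝓝 0) (𝓝 0) := by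
  have : Fact ((1 : ENNReal) ≠ ⊤) := ⟨ENNReal.one_ne_top⟩
  set F := hf.toL1 f
  have hcont : Continuous fun d : G => DomAddAct.mk d +ᵥ F :=
    continuous_vadd.comp (DomAddAct.continuous_mk.prodMk continuous_const)
  have hnorm (d : G) : ∫ x, ‖f (d + x) - f x‖ ∂μ = ‖(DomAddAct.mk d +ᵥ F) - F‖ := by
    rw [L1.norm_eq_integral_norm]
    refine integral_congr_ae ?_
    have htr : (fun x => F (d + x)) =ᵐ[μ] fun x => f (d + x) :=
      (measurePreserving_add_left μ d).quasiMeasurePreserving.ae_eq_comp hf.coeFn_toL1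
    filter_upwards [Lp.coeFn_sub (DomAddAct.mk d +ᵥ F) F,
      DomAddAct.vadd_Lp_ae_eq (DomAddAct.mk d) F, hf.coeFn_toL1, htr] with x hsub hvadd hF htr
    rw [hsub, Pi.sub_apply, hvadd, hF, Equiv.symm_apply_apply, vadd_eq_add, htr]
  simpa [hnorm] using ((hcont.tendsto 0).sub_const F).norm

end Translation

theorem norm_two_smul_setIntegral_sub_integral_le {G E : Type*} [AddGroup G] [MeasurableSpace G]
    [MeasurableAdd G] [NormedAddCommGroup E] [NormedSpace ℝ E] {μ : Measure G}
    [μ.IsAddLeftInvariant] {f : G → E} (hf : Integrable f μ) {s : Set G} (hs : MeasurableSet s)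
    {d : G} (hsd : (d + ·) ⁻¹' s = sᶜ) :
    ‖(2 : ℝ) • ∫ x in s, f x ∂μ - ∫ x, f x ∂μ‖ ≤ ∫ x, ‖f (d + x) - f x‖ ∂μ := by
  have hshift : ∫ x in sᶜ, f x ∂μ = ∫ x in s, f (d + x) ∂μ := by
    rw [← integral_indicator hs.compl, ← integral_indicator hs,
      ← integral_add_left_eq_self (sᶜ.indicator f) d]
    congr 1 with x
    rw [← Set.indicator_comp_right (d + ·), Set.preimage_compl, hsd, compl_compl]
    rfl
  have hfd : Integrable (fun x => f (d + x)) μ := hf.comp_add_left d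
  calc ‖(2 : ℝ) • ∫ x in s, f x ∂μ - ∫ x, f x ∂μ‖
      = ‖∫ x in s, (f x - f (d + x)) ∂μ‖ := by
        rw [← integral_add_compl hs hf, hshift, integral_sub hf.integrableOn hfd.integrableOn,
          two_smul]
        abel_nf
    _ ≤ ∫ x in s, ‖f (d + x) - f x‖ ∂μ := by
        simpa only [norm_sub_rev] using norm_integral_le_integral_norm _
    _ ≤ ∫ x, ‖f (d + x) - f x‖ ∂μ :=
        setIntegral_le_integral (hfd.sub hf).norm (.of_forall fun _ => norm_nonneg _)

theorem preimage_add_left_setOf_floor_div_emod_two_eq_zero {K : Type*} [Field K] [LinearOrder K]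
    [IsStrictOrderedRing K] [FloorRing K] {d : K} (hd : d ≠ 0) :
    (d + ·) ⁻¹' {y : K | ⌊y / d⌋ % 2 = 0} = {y | ⌊y / d⌋ % 2 = 0}ᶜ := by
  ext y
  have hfloor : ⌊(d + y) / d⌋ = ⌊y / d⌋ + 1 := by
    rw [add_div, div_self hd, add_comm, Int.floor_add_one]
  simp only [Set.mem_preimage, Set.mem_ofPred_eq, Set.mem_compl_iff, hfloor]
  omega

theorem measurableSet_setOf_floor_div_emod_two_eq_zero (d : ℝ) :
    MeasurableSet {y : ℝ | ⌊y / d⌋ % 2 = 0} :=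
  (Int.measurable_floor.comp (measurable_div_const d)) (.of_discrete (s := {n : ℤ | n % 2 = 0}))

theorem tendsto_measureReal_setOf_floor_div_emod_two_eq_zero {μ : Measure ℝ} [IsFiniteMeasure μ]
    (hμ : μ ≪ volume) :
    Tendsto (fun d => μ.real {y : ℝ | ⌊y / d⌋ % 2 = 0}) (𝓝[≠] 0) (𝓝 (μ.real Set.univ / 2)) := by
  set f := fun x => (μ.rnDeriv volume x).toReal
  have hf : Integrable f := Measure.integrable_toReal_rnDeriv
  have hbound : ∀ d ≠ (0 : ℝ), ‖μ.real {y : ℝ | ⌊y / d⌋ % 2 = 0} - μ.real Set.univ / 2‖ ≤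
      (∫ x, ‖f (d + x) - f x‖) / 2 := by
    intro d hd
    have h := norm_two_smul_setIntegral_sub_integral_le hf
      (measurableSet_setOf_floor_div_emod_two_eq_zero d)
      (preimage_add_left_setOf_floor_div_emod_two_eq_zero hd)
    rw [Measure.setIntegral_toReal_rnDeriv hμ, Measure.integral_toReal_rnDeriv hμ,
      smul_eq_mul] at h
    rw [show ∀ a b : ℝ, 2 * a - b = 2 * (a - b / 2) by intros; ring, norm_mul,
      Real.norm_ofNat] at h
    linarith
  have hlim : Tendsto (fun d => (∫ x, ‖f (d + x) - f x‖) / 2) (𝓝[≠] 0) (𝓝 0) := by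
    simpa using (hf.tendsto_integral_norm_comp_add_left_sub.div_const 2).mono_left
      nhdsWithin_le_nhds
  rw [← tendsto_sub_nhds_zero_iff]
  exact squeeze_zero_norm' (eventually_nhdsWithin_of_forall hbound) hlim

/-- For a real Gaussian `Y` with mean `m` and variance `v > 0`, the parity bit
`X_d = ⌊Y/d⌋ mod 2` of the scale-`d` quantization satisfies `P(X_d = 0) → 1/2` as
`d → 0⁺`; i.e. the parity becomes a fair coin in the fine-quantization limit. -/
theorem gaussian_parity_tendsto_half (m : ℝ) (v : ℝ≥0) (hv : 0 < v) :
    Tendsto (fun d : ℝ =>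
        ((gaussianReal m v) {y : ℝ | ⌊y / d⌋ % 2 = 0}).toReal)
      (nhdsWithin 0 (Set.Ioi 0)) (nhds (1/2)) := by
  have h := tendsto_measureReal_setOf_floor_div_emod_two_eq_zero
    (gaussianReal_absolutelyContinuous m hv.ne')
  rw [probReal_univ] at h
  exact h.mono_left (nhdsWithin_mono 0 fun _ hd => ne_of_gt (Set.mem_Ioi.mp hd))
end

section
/- Let Y be a real random variable whose law has a density f that is Riemann integrable and of bounded variation on ℝ. For d > 0 let X_d = ⌊Y/d⌋ mod 2. Then P(X_d = 0) → 1/2 as d → 0⁺. -/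
open Filter Topology MeasureTheory

/-!
Translating by `d` swaps the cells with even and odd index `⌊y / d⌋`, so
`P(X_d = 1) = ∫_{X_d = 0} f(y + d) dy` while `P(X_d = 0) = ∫_{X_d = 0} f(y) dy`. The difference
of the two probabilities is thus at most `‖f(· + d) - f‖₁`, which tends to `0` by continuity of
translation in `L¹`; as the two probabilities add up to `1`, each tends to `1/2`.
-/

theorem tendsto_integral_norm_comp_add_right_sub {G E : Type*}
    [TopologicalSpace G] [AddGroup G] [IsTopologicalAddGroup G] [MeasurableSpace G]
    [BorelSpace G] [NormedAddCommGroup E]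
    (μ : Measure G) [IsLocallyFiniteMeasure μ] [μ.InnerRegularCompactLTTop] [μ.IsAddRightInvariant]
    {f : G → E} (hf : Integrable f μ) :
    Tendsto (fun t : G => ∫ x, ‖f (x + t) - f x‖ ∂μ) (𝓝 0) (𝓝 0) := by
  have hmp (t : G) : MeasurePreserving (ContinuousMap.addRight t) μ μ :=
    measurePreserving_add_right μ t
  have hshift : Tendsto (fun t => Lp.compMeasurePreserving _ (hmp t) (hf.toL1 f)) (𝓝 0)
      (𝓝 (Lp.compMeasurePreserving _ (hmp 0) (hf.toL1 f))) :=
    tendsto_const_nhds.compMeasurePreservingLp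
      (ContinuousMap.continuous_of_continuous_uncurry _
        (continuous_snd.add continuous_fst)).continuousAt _ _ ENNReal.one_ne_top
  have hshift0 : Lp.compMeasurePreserving _ (hmp 0) (hf.toL1 f) = hf.toL1 f := by
    ext1
    filter_upwards [Lp.coeFn_compMeasurePreserving (hf.toL1 f) (hmp 0)] with x hx
    exact hx.trans (congrArg _ (add_zero x))
  rw [hshift0, tendsto_iff_norm_sub_tendsto_zero] at hshift
  refine hshift.congr fun t => ?_
  rw [L1.norm_eq_integral_norm]
  refine integral_congr_ae ?_
  filter_upwards [Lp.coeFn_sub (Lp.compMeasurePreserving _ (hmp t) (hf.toL1 f)) (hf.toL1 f),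
    Lp.coeFn_compMeasurePreserving (hf.toL1 f) (hmp t), hf.coeFn_toL1,
    (hmp t).quasiMeasurePreserving.ae_eq_comp hf.coeFn_toL1] with x hsub hcomp hf₀ hft
  rw [hsub, Pi.sub_apply, hcomp, hft, hf₀]
  rfl

theorem norm_setIntegral_sub_setIntegral_compl_le {G E : Type*} [MeasurableSpace G] [AddGroup G]
    [MeasurableAdd G] [NormedAddCommGroup E] [NormedSpace ℝ E]
    {μ : Measure G} [μ.IsAddRightInvariant] {f : G → E} (hf : Integrable f μ)
    {s : Set G} {t : G} (hs : (· + t) ⁻¹' sᶜ = s) :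
    ‖∫ x in s, f x ∂μ - ∫ x in sᶜ, f x ∂μ‖ ≤ ∫ x, ‖f (x + t) - f x‖ ∂μ := by
  have hmp : MeasurePreserving (· + t) μ μ := measurePreserving_add_right μ t
  have hft : Integrable (fun x => f (x + t)) μ := hmp.integrable_comp_of_integrable hf
  have hcompl : ∫ x in sᶜ, f x ∂μ = ∫ x in s, f (x + t) ∂μ := by
    rw [← hmp.setIntegral_preimage_emb (measurableEmbedding_addRight t), hs]
  calc ‖∫ x in s, f x ∂μ - ∫ x in sᶜ, f x ∂μ‖
      = ‖∫ x in s, (f x - f (x + t)) ∂μ‖ := by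
        rw [hcompl, integral_sub hf.integrableOn hft.integrableOn]
    _ ≤ ∫ x in s, ‖f x - f (x + t)‖ ∂μ := norm_integral_le_integral_norm _
    _ ≤ ∫ x, ‖f x - f (x + t)‖ ∂μ :=
        setIntegral_le_integral (hf.sub hft).norm (.of_forall fun _ => norm_nonneg _)
    _ = ∫ x, ‖f (x + t) - f x‖ ∂μ := by simp_rw [norm_sub_rev]

theorem toReal_withDensity_ofReal_apply {α : Type*} [MeasurableSpace α] {μ : Measure α}
    [SFinite μ] {f : α → ℝ} (hf : AEStronglyMeasurable f μ) (hf₀ : ∀ x, 0 ≤ f x) (s : Set α) :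
    (μ.withDensity (fun x => ENNReal.ofReal (f x)) s).toReal = ∫ x in s, f x ∂μ := by
  rw [withDensity_apply' _ s, integral_eq_lintegral_of_nonneg_ae (.of_forall hf₀) hf.restrict]

def evenBins (d : ℝ) : Set ℝ := {y | ⌊y / d⌋ % 2 = 0}

theorem measurableSet_evenBins (d : ℝ) : MeasurableSet (evenBins d) :=
  (Int.measurable_floor.comp (measurable_id.div_const d))
    (.of_discrete (s := {n : ℤ | n % 2 = 0}))

theorem preimage_add_compl_evenBins {d : ℝ} (hd : d ≠ 0) :
    (· + d) ⁻¹' (evenBins d)ᶜ = evenBins d := by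
  ext y
  have hshift : (y + d) / d = y / d + (1 : ℤ) := by field_simp; push_cast; ring
  simp only [evenBins, Set.mem_preimage, Set.mem_compl_iff, Set.mem_ofPred_eq, hshift,
    Int.floor_add_intCast]
  omega

theorem bv_density_parity_tendsto_half_general (f : ℝ → ℝ) (μ : Measure ℝ) [IsProbabilityMeasure μ]
    (hf_int : Integrable f volume)
    (hf_nonneg : ∀ y, 0 ≤ f y)
    (hμ : μ = volume.withDensity (fun y => ENNReal.ofReal (f y))) :
    Tendsto (fun d : ℝ => (μ {y : ℝ | ⌊y / d⌋ % 2 = 0}).toReal)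
      (nhdsWithin 0 (Set.Ioi 0)) (nhds (1/2)) := by
  have hμ_eq (s : Set ℝ) : (μ s).toReal = ∫ y in s, f y := by
    rw [hμ, toReal_withDensity_ofReal_apply hf_int.aestronglyMeasurable hf_nonneg]
  have hsplit (d : ℝ) : (∫ y in evenBins d, f y) + ∫ y in (evenBins d)ᶜ, f y = 1 := by
    rw [integral_add_compl (measurableSet_evenBins d) hf_int, ← setIntegral_univ, ← hμ_eq,
      measure_univ, ENNReal.toReal_one]
  have hdiff : Tendsto (fun d => (∫ y in evenBins d, f y) - ∫ y in (evenBins d)ᶜ, f y)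
      (𝓝[>] 0) (𝓝 0) := by
    refine squeeze_zero_norm' ?_
      ((tendsto_integral_norm_comp_add_right_sub volume hf_int).mono_left nhdsWithin_le_nhds)
    filter_upwards [self_mem_nhdsWithin] with d (hd : 0 < d)
    exact norm_setIntegral_sub_setIntegral_compl_le hf_int (preimage_add_compl_evenBins hd.ne')
  have hhalf := (hdiff.const_add 1).div_const 2
  rw [add_zero] at hhalf
  refine hhalf.congr fun d => ?_
  rw [show {y : ℝ | ⌊y / d⌋ % 2 = 0} = evenBins d from rfl, hμ_eq]
  linarith [hsplit d]

/-- If the law of a real random variable has a density `f` that is (Riemann) integrable and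
of bounded variation on `ℝ`, then the parity bit `X_d = ⌊Y/d⌋ mod 2` of the scale-`d`
quantization satisfies `P(X_d = 0) → 1/2` as `d → 0⁺`. -/
theorem bv_density_parity_tendsto_half (f : ℝ → ℝ) (μ : Measure ℝ) [IsProbabilityMeasure μ]
    (hf_int : Integrable f volume) (hf_bv : BoundedVariationOn f Set.univ)
    (hf_nonneg : ∀ y, 0 ≤ f y)
    (hμ : μ = volume.withDensity (fun y => ENNReal.ofReal (f y))) :
    Tendsto (fun d : ℝ => (μ {y : ℝ | ⌊y / d⌋ % 2 = 0}).toReal)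
      (nhdsWithin 0 (Set.Ioi 0)) (nhds (1/2)) :=
  bv_density_parity_tendsto_half_general f μ hf_int hf_nonneg hμ
end

section
/- Let Y be a real Gaussian random variable with variance σ², and for d > 0 let X_d = ⌊Y/d⌋ mod 2. Then H(X_d) → 0 as σ/d → 0 with the mean μ fixed at a point that is not of the form kd for integer k (i.e., μ/d ∉ ℤ, d fixed, σ → 0). -/
open Filter Topology MeasureTheory ProbabilityTheory NNReal

/-- Binary entropy (in bits) of a probability `p`, with the convention `0·log 0 = 0`. -/
noncomputable def binEnt (p : ℝ) : ℝ :=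
  -(p * Real.logb 2 p) - (1 - p) * Real.logb 2 (1 - p)

open scoped ENNReal

/-! By Chebyshev's inequality `N(m, v)` concentrates at `m` as `v → 0`, so it charges a set `s`
with mass tending to `1` or `0` according as `s` or its complement is a neighbourhood of `m`.
For the parity set `{y | ⌊y/d⌋ odd}` one of the two is, because its boundary lies in `dℤ`;
the parity bit thus becomes deterministic and, `binEnt` being continuous with
`binEnt 0 = binEnt 1 = 0`, its entropy tends to `0`. -/

lemma binEnt_eq_negMulLog (p : ℝ) :
    binEnt p = (Real.negMulLog p + Real.negMulLog (1 - p)) / Real.log 2 := by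
  simp only [binEnt, Real.negMulLog, Real.logb]
  ring

lemma continuous_binEnt : Continuous binEnt := by
  simp only [funext binEnt_eq_negMulLog]
  fun_prop

@[simp] lemma binEnt_zero : binEnt 0 = 0 := by simp [binEnt]

@[simp] lemma binEnt_one : binEnt 1 = 0 := by simp [binEnt]

lemma Int.eventually_floor_eq {α : Type*} [Ring α] [LinearOrder α] [IsStrictOrderedRing α]
    [FloorRing α] [TopologicalSpace α] [OrderTopology α] {x : α}
    (hx : x ∉ Set.range Int.cast) : ∀ᶠ y in 𝓝 x, ⌊y⌋ = ⌊x⌋ := by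
  have hlt : (⌊x⌋ : α) < x := (Int.floor_le x).lt_of_ne fun h => hx ⟨_, h⟩
  filter_upwards [Ioo_mem_nhds hlt (Int.lt_floor_add_one x)] with y hy
  exact Int.floor_eq_on_Ico _ y (Set.Ioo_subset_Ico_self hy)

lemma gaussianReal_abs_sub_ge_le_div_sq (m : ℝ) (v : ℝ≥0) {ε : ℝ} (hε : 0 < ε) :
    gaussianReal m v {y | ε ≤ |y - m|} ≤ ENNReal.ofReal (v / ε ^ 2) := by
  simpa [integral_id_gaussianReal, variance_id_gaussianReal] using
    meas_ge_le_variance_div_sq (memLp_id_gaussianReal 2) hε (μ := gaussianReal m v)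

lemma tendsto_gaussianReal_compl_of_mem_nhds {m : ℝ} {s : Set ℝ} (hs : s ∈ 𝓝 m) :
    Tendsto (fun v : ℝ≥0 => gaussianReal m v sᶜ) (𝓝 0) (𝓝 0) := by
  obtain ⟨ε, hε, hball⟩ := Metric.mem_nhds_iff.1 hs
  have hsub : sᶜ ⊆ {y | ε ≤ |y - m|} := fun y hy => by
    by_contra hlt
    exact hy (hball (by simpa [Real.dist_eq] using hlt))
  have hbound : Tendsto (fun v : ℝ≥0 => ENNReal.ofReal (v / ε ^ 2)) (𝓝 0) (𝓝 0) := by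
    simpa [Function.comp_def] using (ENNReal.continuous_ofReal.comp
      (NNReal.continuous_coe.div_const (ε ^ 2))).tendsto (0 : ℝ≥0)
  exact tendsto_of_tendsto_of_tendsto_of_le_of_le tendsto_const_nhds hbound (fun _ => bot_le)
    fun v => (measure_mono hsub).trans (gaussianReal_abs_sub_ge_le_div_sq m v hε)

lemma tendsto_gaussianReal_of_mem_nhds {m : ℝ} {s : Set ℝ} (hs : s ∈ 𝓝 m) :
    Tendsto (fun v : ℝ≥0 => gaussianReal m v s) (𝓝 0) (𝓝 1) := by
  have hlower : Tendsto (fun v : ℝ≥0 => 1 - gaussianReal m v sᶜ) (𝓝 0) (𝓝 1) := by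
    simpa using ENNReal.Tendsto.sub tendsto_const_nhds
      (tendsto_gaussianReal_compl_of_mem_nhds hs) (Or.inl ENNReal.one_ne_top)
  refine tendsto_of_tendsto_of_tendsto_of_le_of_le hlower tendsto_const_nhds (fun v => ?_)
    fun v => prob_le_one
  simpa using tsub_le_iff_right.2 (measure_univ_le_add_compl s (μ := gaussianReal m v))

lemma tendsto_gaussianReal_indicator {m : ℝ} {s : Set ℝ} (hs : ∀ᶠ y in 𝓝 m, y ∈ s ↔ m ∈ s) :
    Tendsto (fun v : ℝ≥0 => gaussianReal m v s) (𝓝 0) (𝓝 (s.indicator 1 m)) := by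
  by_cases hm : m ∈ s
  · simpa [hm] using tendsto_gaussianReal_of_mem_nhds (hs.mono fun y hy => hy.2 hm)
  · simpa [hm] using tendsto_gaussianReal_compl_of_mem_nhds (s := sᶜ)
      (hs.mono fun y hy hys => hm (hy.1 hys))

/-- Fix a quantization scale `d > 0` and a mean `m` that is not a lattice point `k·d`.
As the Gaussian `Y ~ N(m, σ²)` concentrates (`σ → 0⁺`), the parity bit
`X_d = ⌊Y/d⌋ mod 2` becomes deterministic: its entropy `H(X_d)` tends to `0`. -/
theorem gaussian_parity_entropy_tendsto_zero (d m : ℝ) (hd : 0 < d)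
    (hm : ¬ ∃ k : ℤ, m = k * d) :
    Tendsto (fun σ : ℝ =>
        binEnt (((gaussianReal m (⟨σ ^ 2, sq_nonneg σ⟩ : ℝ≥0))
          {y : ℝ | ⌊y / d⌋ % 2 = 1}).toReal))
      (nhdsWithin 0 (Set.Ioi 0)) (nhds 0) := by
  set S := {y : ℝ | ⌊y / d⌋ % 2 = 1}
  have hmd : m / d ∉ Set.range Int.cast := by
    rintro ⟨k, hk⟩
    exact hm ⟨k, by rw [hk, div_mul_cancel₀ m hd.ne']⟩
  have hS : ∀ᶠ y in 𝓝 m, y ∈ S ↔ m ∈ S :=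
    ((continuous_id.div_const d).tendsto m).eventually (Int.eventually_floor_eq hmd)
      |>.mono fun y (hy : ⌊y / d⌋ = ⌊m / d⌋) => by simp only [S, Set.mem_ofPred_eq, hy]
  have hvar : Tendsto (fun σ : ℝ => (⟨σ ^ 2, sq_nonneg σ⟩ : ℝ≥0)) (𝓝[>] 0) (𝓝 0) := by
    refine (Continuous.tendsto' ?_ 0 0 (by ext; simp)).mono_left nhdsWithin_le_nhds
    fun_prop
  have hfinite : S.indicator (1 : ℝ → ℝ≥0∞) m ≠ ⊤ := by
    by_cases hmS : m ∈ S <;> simp [hmS]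
  have hent : binEnt (S.indicator (1 : ℝ → ℝ≥0∞) m).toReal = 0 := by
    by_cases hmS : m ∈ S <;> simp [hmS]
  have h := (continuous_binEnt.tendsto _).comp <| (ENNReal.tendsto_toReal hfinite).comp <|
    (tendsto_gaussianReal_indicator hS).comp hvar
  rwa [hent] at h
end
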